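/- arXiv:2409.19561 — 2 statements merged into one kernel-verified Lean document; each statement's English description precedes it below -/
import Mathlib

section
/- Fix real constants c and y, and for α ∈ (0,1] define g_α(β) = e^{c(α+β)}(e^{c(α+β)} − y) for 0 < β < 1 − α and g_α(β) = e^{c}(e^{c} − y) for 1 − α ≤ β ≤ 1. Define f(α) = (∫₀¹ g_α(β)g₁(β) dβ) / (√(∫₀¹ g_α(β)² dβ)·√(∫₀¹ g₁(β)² dβ)). Assume e^{c}(e^{c} − y) ≠ 0. Then there exists a constant K and δ > 0 such that |1 − f(α)²| ≤ K·(1 − α)³ for all α ∈ (1 − δ, 1]; that is, f(α)² = 1 + O((1 − α)³) as α → 1. -/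
/-!
Since `g₁ ≡ E := e^c (e^c - y)` on `[0,1]`, `f(α)² = (∫ g_α)² / ∫ g_α²`, so `1 - f(α)²` is the
variance of `g_α` divided by `∫ g_α²`. The variance does not change when `E` is subtracted, and
`g_α - E` vanishes on `[1 - α, 1]` and is `O(1 - α)` on `[0, 1 - α]` (as `g_α(β)` is the smooth
function `s ↦ e^{cs}(e^{cs} - y)` evaluated at `min (α + β) 1`). Hence the variance is
`O((1 - α)³)`, while `∫ g_α² ≥ α E²` stays away from `0`.
-/

noncomputable def gfun (c y : ℝ) (α : ℝ) (β : ℝ) : ℝ :=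
  if β < 1 - α then Real.exp (c * (α + β)) * (Real.exp (c * (α + β)) - y)
  else Real.exp c * (Real.exp c - y)

noncomputable def ffun (c y : ℝ) (α : ℝ) : ℝ :=
  (∫ β in (0:ℝ)..1, gfun c y α β * gfun c y 1 β) /
    (Real.sqrt (∫ β in (0:ℝ)..1, (gfun c y α β) ^ 2) *
      Real.sqrt (∫ β in (0:ℝ)..1, (gfun c y 1 β) ^ 2))

open Real Set MeasureTheory

theorem intervalIntegral_eq_add_mul_of_eqOn_const {f : ℝ → ℝ} {a b ε C : ℝ} (haε : a ≤ ε)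
    (hεb : ε ≤ b) (hf : IntervalIntegrable f volume a b) (hC : EqOn f (fun _ => C) (Icc ε b)) :
    ∫ x in a..b, f x = (∫ x in a..ε, f x) + (b - ε) * C := by
  have hab : uIcc a b = Icc a b := uIcc_of_le (haε.trans hεb)
  have hleft : IntervalIntegrable f volume a ε :=
    hf.mono_set (by rw [uIcc_of_le haε, hab]; exact Icc_subset_Icc_right hεb)
  have hright : IntervalIntegrable f volume ε b :=
    hf.mono_set (by rw [uIcc_of_le hεb, hab]; exact Icc_subset_Icc_left haε)
  rw [← intervalIntegral.integral_add_adjacent_intervals hleft hright,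
    intervalIntegral.integral_congr (a := ε) (g := fun _ => C) (by rwa [uIcc_of_le hεb]),
    intervalIntegral.integral_const, smul_eq_mul]

theorem abs_intervalIntegral_le_of_eqOn_zero {f : ℝ → ℝ} {a b ε C : ℝ} (haε : a ≤ ε)
    (hεb : ε ≤ b) (hf : IntervalIntegrable f volume a b) (hzero : EqOn f (fun _ => 0) (Icc ε b))
    (hbound : ∀ x ∈ Ioc a ε, |f x| ≤ C) :
    |∫ x in a..b, f x| ≤ C * (ε - a) := by
  rw [intervalIntegral_eq_add_mul_of_eqOn_const haε hεb hf hzero, mul_zero, add_zero,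
    ← abs_of_nonneg (sub_nonneg.2 haε)]
  exact intervalIntegral.norm_integral_le_of_norm_le_const (f := f) (by rwa [uIoc_of_le haε])

theorem integral_sq_sub_sq_integral_eq_of_sub_const {g : ℝ → ℝ}
    (hg : IntervalIntegrable g volume 0 1) (hg2 : IntervalIntegrable (fun x => g x ^ 2) volume 0 1)
    (E : ℝ) :
    (∫ x in (0:ℝ)..1, g x ^ 2) - (∫ x in (0:ℝ)..1, g x) ^ 2 =
      (∫ x in (0:ℝ)..1, (g x - E) ^ 2) - (∫ x in (0:ℝ)..1, (g x - E)) ^ 2 := by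
  have hexpand : ∀ x, (g x - E) ^ 2 = g x ^ 2 - 2 * E * g x + E ^ 2 := fun x => by ring
  simp only [hexpand]
  rw [intervalIntegral.integral_add (hg2.sub (hg.const_mul _)) intervalIntegrable_const,
    intervalIntegral.integral_sub hg2 (hg.const_mul _),
    intervalIntegral.integral_sub hg intervalIntegrable_const,
    intervalIntegral.integral_const_mul, intervalIntegral.integral_const,
    intervalIntegral.integral_const]
  simp only [sub_zero, smul_eq_mul, one_mul]
  ring

noncomputable def gprofile (c y s : ℝ) : ℝ := exp (c * s) * (exp (c * s) - y)

theorem gfun_eq_gprofile_min (c y α β : ℝ) : gfun c y α β = gprofile c y (min (α + β) 1) := by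
  unfold gfun gprofile
  split_ifs with h
  · rw [min_eq_left (by linarith)]
  · rw [min_eq_right (by linarith), mul_one]

theorem continuous_gfun (c y α : ℝ) : Continuous (gfun c y α) := by
  simp only [funext (gfun_eq_gprofile_min c y α), gprofile]
  fun_prop

theorem gfun_of_one_sub_le {c y α β : ℝ} (h : 1 - α ≤ β) : gfun c y α β = exp c * (exp c - y) :=
  if_neg h.not_gt

theorem exists_abs_gfun_sub_le (c y : ℝ) :
    ∃ L, ∀ α ∈ Icc (0:ℝ) 1, ∀ β, 0 ≤ β → |gfun c y α β - exp c * (exp c - y)| ≤ L * (1 - α) := by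
  have hsmooth : ContDiff ℝ 1 (gprofile c y) := by unfold gprofile; fun_prop
  obtain ⟨K, hK⟩ := hsmooth.locallyLipschitz.locallyLipschitzOn.exists_lipschitzOnWith_of_compact
    (isCompact_Icc (a := (0:ℝ)) (b := 1))
  refine ⟨K, fun α hα β hβ => ?_⟩
  have hαs : α ≤ min (α + β) 1 := le_min (by linarith) hα.2
  have hs : min (α + β) 1 ∈ Icc (0:ℝ) 1 := ⟨hα.1.trans hαs, min_le_right _ _⟩
  have hone : exp c * (exp c - y) = gprofile c y 1 := by rw [gprofile, mul_one]
  rw [gfun_eq_gprofile_min, hone, ← Real.dist_eq]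
  calc dist (gprofile c y (min (α + β) 1)) (gprofile c y 1)
      ≤ K * dist (min (α + β) 1) 1 := hK.dist_le_mul _ hs _ ⟨zero_le_one, le_rfl⟩
    _ ≤ K * (1 - α) := by
      gcongr
      rw [Real.dist_eq, abs_le]
      constructor <;> linarith [min_le_right (α + β) 1]

theorem ffun_sq_eq {c y : ℝ} (h : exp c * (exp c - y) ≠ 0) (α : ℝ) :
    ffun c y α ^ 2 = (∫ β in (0:ℝ)..1, gfun c y α β) ^ 2 / ∫ β in (0:ℝ)..1, gfun c y α β ^ 2 := by
  set E := exp c * (exp c - y)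
  have hone : EqOn (gfun c y 1) (fun _ => E) (uIcc 0 1) := fun β hβ =>
    gfun_of_one_sub_le (by rw [uIcc_of_le zero_le_one] at hβ; linarith [hβ.1])
  have hnonneg : 0 ≤ ∫ β in (0:ℝ)..1, gfun c y α β ^ 2 :=
    intervalIntegral.integral_nonneg zero_le_one fun β _ => sq_nonneg _
  rw [ffun, intervalIntegral.integral_congr fun β hβ => congrArg (gfun c y α β * ·) (hone hβ),
    intervalIntegral.integral_congr fun β hβ => congrArg (· ^ 2) (hone hβ),
    intervalIntegral.integral_mul_const, intervalIntegral.integral_const, sub_zero, one_smul,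
    sqrt_sq_eq_abs, div_pow, mul_pow, mul_pow (√_), sq_sqrt hnonneg, sq_abs]
  exact mul_div_mul_right _ _ (pow_ne_zero 2 h)

theorem mul_sq_le_integral_gfun_sq {c y α : ℝ} (hα : α ∈ Icc (0:ℝ) 1) :
    α * (exp c * (exp c - y)) ^ 2 ≤ ∫ β in (0:ℝ)..1, gfun c y α β ^ 2 := by
  have hsplit := intervalIntegral_eq_add_mul_of_eqOn_const (f := fun β => gfun c y α β ^ 2)
    (sub_nonneg.2 hα.2) (sub_le_self 1 hα.1)
    (((continuous_gfun c y α).pow 2).intervalIntegrable _ _)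
    fun β hβ => congrArg (· ^ 2) (gfun_of_one_sub_le hβ.1)
  have hhead : 0 ≤ ∫ β in (0:ℝ)..1 - α, gfun c y α β ^ 2 :=
    intervalIntegral.integral_nonneg (sub_nonneg.2 hα.2) fun β _ => sq_nonneg _
  rw [hsplit, sub_sub_cancel]
  linarith

theorem exists_abs_integral_gfun_sq_sub_sq_le (c y : ℝ) :
    ∃ L, ∀ α ∈ Icc (0:ℝ) 1, |(∫ β in (0:ℝ)..1, gfun c y α β ^ 2) -
      (∫ β in (0:ℝ)..1, gfun c y α β) ^ 2| ≤ L * (1 - α) ^ 3 := by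
  set E := exp c * (exp c - y)
  obtain ⟨L, hL⟩ := exists_abs_gfun_sub_le c y
  refine ⟨2 * L ^ 2, fun α hα => ?_⟩
  set ε := 1 - α
  have hε₀ : 0 ≤ ε := sub_nonneg.2 hα.2
  have hε₁ : ε ≤ 1 := sub_le_self 1 hα.1
  set g := gfun c y α
  have hg : Continuous g := continuous_gfun c y α
  have hconst : EqOn g (fun _ => E) (Icc ε 1) := fun β hβ => gfun_of_one_sub_le hβ.1
  have hdev : ∀ β ∈ Ioc 0 ε, |g β - E| ≤ L * ε := fun β hβ => hL α hα β hβ.1.le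
  have hmean : |∫ β in (0:ℝ)..1, (g β - E)| ≤ L * ε * ε := by
    simpa using abs_intervalIntegral_le_of_eqOn_zero hε₀ hε₁
      ((hg.sub continuous_const).intervalIntegrable _ _)
      (fun β hβ => sub_eq_zero.2 (hconst hβ)) hdev
  have hsq : |∫ β in (0:ℝ)..1, (g β - E) ^ 2| ≤ (L * ε) ^ 2 * ε := by
    simpa using abs_intervalIntegral_le_of_eqOn_zero (f := fun β => (g β - E) ^ 2) hε₀ hε₁
      (((hg.sub continuous_const).pow 2).intervalIntegrable _ _)
      (fun β hβ => by simp [hconst hβ])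
      (fun β hβ => by rw [abs_pow]; exact pow_le_pow_left₀ (abs_nonneg _) (hdev β hβ) 2)
  rw [integral_sq_sub_sq_integral_eq_of_sub_const (hg.intervalIntegrable _ _)
    ((hg.pow 2).intervalIntegrable _ _) E]
  calc _ ≤ |∫ β in (0:ℝ)..1, (g β - E) ^ 2| + |∫ β in (0:ℝ)..1, (g β - E)| ^ 2 :=
        (abs_sub _ _).trans_eq (by rw [abs_pow])
    _ ≤ (L * ε) ^ 2 * ε + (L * ε * ε) ^ 2 := by gcongr
    _ ≤ 2 * L ^ 2 * ε ^ 3 := by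
      nlinarith [sq_nonneg L, pow_le_pow_of_le_one hε₀ hε₁ (show 3 ≤ 4 by norm_num)]

theorem ffun_sq_one_sub_cubic (c y : ℝ) (h : Real.exp c * (Real.exp c - y) ≠ 0) :
    ∃ K δ : ℝ, 0 < δ ∧ ∀ α ∈ Set.Ioc (1 - δ) 1,
      |1 - (ffun c y α) ^ 2| ≤ K * (1 - α) ^ 3 := by
  set E := exp c * (exp c - y)
  obtain ⟨L, hL⟩ := exists_abs_integral_gfun_sq_sub_sq_le c y
  refine ⟨2 * L / E ^ 2, 1 / 2, one_half_pos, fun α ⟨hα₁, hα₂⟩ => ?_⟩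
  have hα : α ∈ Icc (0:ℝ) 1 := ⟨by linarith, hα₂⟩
  have hnorm : E ^ 2 / 2 ≤ ∫ β in (0:ℝ)..1, gfun c y α β ^ 2 :=
    le_trans (by nlinarith [sq_nonneg E]) (mul_sq_le_integral_gfun_sq hα)
  have hpos : 0 < ∫ β in (0:ℝ)..1, gfun c y α β ^ 2 := lt_of_lt_of_le (by positivity) hnorm
  rw [ffun_sq_eq h, one_sub_div hpos.ne', abs_div, abs_of_pos hpos]
  calc _ ≤ L * (1 - α) ^ 3 / (E ^ 2 / 2) :=
        div_le_div₀ ((abs_nonneg _).trans (hL α hα)) (hL α hα) (by positivity) hnorm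
    _ = 2 * L / E ^ 2 * (1 - α) ^ 3 := by field_simp
end

section
/- Let u* minimize a c-strongly convex, L-smooth function J : ℝ^m → ℝ, and suppose a deterministic gradient estimator g : ℝ^m → ℝ^m satisfies ⟨∇J(u), g(u)⟩ ≥ μ‖∇J(u)‖² and ‖g(u)‖ ≤ μ_G‖∇J(u)‖ for constants μ_G ≥ μ > 0 and all u. Then for fixed step size 0 < η ≤ μ/(L·μ_G²), the iterates u^{τ+1} = u^τ − η g(u^τ) satisfy J(u^τ) − J(u*) ≤ (1 − η c μ)^τ · (J(u⁰) − J(u*)) for all τ ≥ 0. -/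
/-!
The first-order convexity inequality and Lipschitz continuity of `gradJ` force `gradJ` to be the
Fréchet derivative of `J`; comparing derivatives along a segment then gives the descent lemma
`J v ≤ J u + ⟪gradJ u, v - u⟫ + L / 2 * ‖v - u‖ ^ 2`. For the step `u - η • g u` it yields, by the
step size bound, the decrease `J u - η * μ / 2 * ‖gradJ u‖ ^ 2`, and the Polyak–Łojasiewicz
inequality `2 * c * (J u - J u') ≤ ‖gradJ u‖ ^ 2` turns this into contraction of the gap by the
factor `1 - η * c * μ`, which is nonnegative since `c ≤ L`.
-/

open Asymptotics Set
open scoped RealInnerProductSpace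

variable {E : Type*} [NormedAddCommGroup E] [InnerProductSpace ℝ E]

theorem inner_sub_le_of_lipschitz {g : E → E} {L : ℝ}
    (hlip : ∀ u v, ‖g u - g v‖ ≤ L * ‖u - v‖) (u v w : E) :
    ⟪g u - g v, w⟫ ≤ L * ‖u - v‖ * ‖w‖ :=
  (real_inner_le_norm _ _).trans (by gcongr; exact hlip u v)

theorem hasFDerivAt_of_convex_of_lipschitz {J : E → ℝ} {g : E → E} {L : ℝ}
    (hconv : ∀ u v, J u + ⟪g u, v - u⟫ ≤ J v)
    (hlip : ∀ u v, ‖g u - g v‖ ≤ L * ‖u - v‖) (u : E) :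
    HasFDerivAt J (innerSL ℝ (g u)) u := by
  rw [hasFDerivAt_iff_isLittleO_nhds_zero]
  refine IsBigO.trans_isLittleO ?_ (isLittleO_norm_pow_id one_lt_two)
  refine IsBigO.of_bound L (Filter.Eventually.of_forall fun h => ?_)
  have lower := hconv u (u + h)
  have upper := hconv (u + h) u
  have hcs := inner_sub_le_of_lipschitz hlip (u + h) u h
  simp only [add_sub_cancel_left, sub_add_cancel_left, inner_neg_right, inner_sub_left] at *
  rw [innerSL_apply_apply, Real.norm_eq_abs, norm_pow, norm_norm, abs_le]
  constructor <;> linarith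

theorem le_add_inner_add_half_mul_sq_norm {J : E → ℝ} {g : E → E} {L : ℝ}
    (hJ : ∀ x, HasFDerivAt J (innerSL ℝ (g x)) x)
    (hlip : ∀ u v, ‖g u - g v‖ ≤ L * ‖u - v‖) (u v : E) :
    J v ≤ J u + ⟪g u, v - u⟫ + L / 2 * ‖v - u‖ ^ 2 := by
  set d := v - u
  let φ : ℝ → ℝ := fun t => J (u + t • d) - t * ⟪g u, d⟫ - L / 2 * t ^ 2 * ‖d‖ ^ 2
  have hφ : ∀ t, HasDerivAt φ (⟪g (u + t • d) - g u, d⟫ - L * t * ‖d‖ ^ 2) t := by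
    intro t
    have hpath : HasDerivAt (fun s : ℝ => u + s • d) d t := by
      simpa using ((hasDerivAt_id t).smul_const d).const_add u
    refine HasDerivAt.congr_deriv
      ((((hJ _).comp_hasDerivAt t hpath).sub ((hasDerivAt_id t).mul_const ⟪g u, d⟫)).sub
        (((hasDerivAt_pow 2 t).const_mul (L / 2)).mul_const (‖d‖ ^ 2))) ?_
    simp only [innerSL_apply_apply, inner_sub_left]
    ring
  have hanti : AntitoneOn φ (Ici 0) := by
    refine antitoneOn_of_hasDerivWithinAt_nonpos (convex_Ici 0)
      (fun t _ => (hφ t).continuousAt.continuousWithinAt) (fun t _ => (hφ t).hasDerivWithinAt) ?_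
    intro t ht
    rw [interior_Ici] at ht
    have hcs := inner_sub_le_of_lipschitz hlip (u + t • d) u d
    rw [add_sub_cancel_left, norm_smul, Real.norm_of_nonneg ht.le] at hcs
    linarith
  have hφ₁ := hanti (mem_Ici.2 le_rfl) (mem_Ici.2 zero_le_one) zero_le_one
  simp only [φ, d, add_sub_cancel, one_smul, zero_smul, add_zero] at hφ₁
  linarith

theorem two_mul_sub_le_sq_norm_of_strongConvex {J : E → ℝ} {g : E → E} {c : ℝ} (hc : 0 < c)
    (hstrong : ∀ u v, J u + ⟪g u, v - u⟫ + c / 2 * ‖u - v‖ ^ 2 ≤ J v) (x y : E) :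
    2 * c * (J x - J y) ≤ ‖g x‖ ^ 2 := by
  have hxy := hstrong x y
  have hcs := neg_le_of_abs_le (abs_real_inner_le_norm (g x) (y - x))
  rw [norm_sub_rev] at hxy
  nlinarith [sq_nonneg (c * ‖y - x‖ - ‖g x‖)]

theorem le_of_strongConvex_of_lipschitz [Nontrivial E] {J : E → ℝ} {g : E → E} {c L : ℝ}
    (hstrong : ∀ u v, J u + ⟪g u, v - u⟫ + c / 2 * ‖u - v‖ ^ 2 ≤ J v)
    (hlip : ∀ u v, ‖g u - g v‖ ≤ L * ‖u - v‖) : c ≤ L := by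
  obtain ⟨d, hd⟩ := exists_ne (0 : E)
  have h₁ := hstrong d 0
  have h₂ := hstrong 0 d
  have hcs := inner_sub_le_of_lipschitz hlip d 0 d
  simp only [zero_sub, sub_zero, norm_neg, inner_neg_right, inner_sub_left] at *
  have hd₂ : 0 < ‖d‖ ^ 2 := by positivity
  nlinarith

theorem le_sub_mul_sq_norm_of_biased_step {J : E → ℝ} {gradJ g : E → E} {L μ μG η : ℝ}
    (hJ : ∀ x, HasFDerivAt J (innerSL ℝ (gradJ x)) x)
    (hlip : ∀ u v, ‖gradJ u - gradJ v‖ ≤ L * ‖u - v‖) (hL : 0 ≤ L) (hη : 0 ≤ η)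
    (hηL : η * L * μG ^ 2 ≤ μ) {x : E} (hlb : μ * ‖gradJ x‖ ^ 2 ≤ ⟪gradJ x, g x⟫)
    (hub : ‖g x‖ ≤ μG * ‖gradJ x‖) :
    J (x - η • g x) ≤ J x - η * μ / 2 * ‖gradJ x‖ ^ 2 := by
  have hdesc := le_add_inner_add_half_mul_sq_norm hJ hlip x (x - η • g x)
  rw [sub_sub_cancel_left, inner_neg_right, inner_smul_right, norm_neg, norm_smul,
    Real.norm_of_nonneg hη] at hdesc
  have hg : ‖g x‖ ^ 2 ≤ μG ^ 2 * ‖gradJ x‖ ^ 2 := by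
    rw [← mul_pow]; exact pow_le_pow_left₀ (norm_nonneg _) hub 2
  nlinarith [mul_le_mul_of_nonneg_left hg (by positivity : 0 ≤ L * η ^ 2),
    mul_le_mul_of_nonneg_left hlb hη,
    mul_le_mul_of_nonneg_right hηL (by positivity : 0 ≤ η * ‖gradJ x‖ ^ 2)]

theorem sub_le_one_sub_mul_sub_of_biased_step {J : E → ℝ} {gradJ g : E → E} {c L μ μG η : ℝ}
    (hc : 0 < c) (hL : 0 ≤ L) (hμ : 0 ≤ μ) (hη : 0 ≤ η) (hηL : η * L * μG ^ 2 ≤ μ)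
    (hstrong : ∀ u v, J u + ⟪gradJ u, v - u⟫ + c / 2 * ‖u - v‖ ^ 2 ≤ J v)
    (hlip : ∀ u v, ‖gradJ u - gradJ v‖ ≤ L * ‖u - v‖) {x : E}
    (hlb : μ * ‖gradJ x‖ ^ 2 ≤ ⟪gradJ x, g x⟫) (hub : ‖g x‖ ≤ μG * ‖gradJ x‖) (y : E) :
    J (x - η • g x) - J y ≤ (1 - η * c * μ) * (J x - J y) := by
  have hJ := hasFDerivAt_of_convex_of_lipschitz
    (fun u v => (le_add_of_nonneg_right (by positivity)).trans (hstrong u v)) hlip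
  have hdecrease := le_sub_mul_sq_norm_of_biased_step hJ hlip hL hη hηL hlb hub
  have hPL := two_mul_sub_le_sq_norm_of_strongConvex hc hstrong x y
  nlinarith [mul_le_mul_of_nonneg_left hPL (by positivity : 0 ≤ η * μ)]

theorem biased_gradient_descent_linear_convergence_general {m : ℕ}
    (J : EuclideanSpace ℝ (Fin m) → ℝ)
    (gradJ g : EuclideanSpace ℝ (Fin m) → EuclideanSpace ℝ (Fin m))
    (c L μ μG η : ℝ) (hc : 0 < c) (hL : 0 < L) (hμ : 0 < μ) (hμG : μ ≤ μG)
    (hstrong : ∀ u u', J u' ≥ J u + (inner ℝ (gradJ u) (u' - u) : ℝ) + c / 2 * ‖u - u'‖ ^ 2)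
    (hsmooth : ∀ u u', ‖gradJ u - gradJ u'‖ ≤ L * ‖u - u'‖)
    (ustar : EuclideanSpace ℝ (Fin m))
    (hlb : ∀ u, (inner ℝ (gradJ u) (g u) : ℝ) ≥ μ * ‖gradJ u‖ ^ 2)
    (hub : ∀ u, ‖g u‖ ≤ μG * ‖gradJ u‖)
    (hη : 0 < η) (hη' : η ≤ μ / (L * μG ^ 2))
    (u : ℕ → EuclideanSpace ℝ (Fin m))
    (hiter : ∀ τ : ℕ, u (τ + 1) = u τ - η • g (u τ)) :
    ∀ τ : ℕ, J (u τ) - J ustar ≤ (1 - η * c * μ) ^ τ * (J (u 0) - J ustar) := by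
  intro τ
  rcases subsingleton_or_nontrivial (EuclideanSpace ℝ (Fin m)) with hE | hE
  · simp [Subsingleton.elim (u τ) ustar, Subsingleton.elim (u 0) ustar]
  have hμG₀ : 0 < μG := hμ.trans_le hμG
  have hηL : η * L * μG ^ 2 ≤ μ := by
    rwa [le_div_iff₀ (by positivity), ← mul_assoc] at hη'
  have hcL := le_of_strongConvex_of_lipschitz hstrong hsmooth
  have hρ : 0 ≤ 1 - η * c * μ := by
    have hμ₂ : μ ^ 2 ≤ μG ^ 2 := pow_le_pow_left₀ hμ.le hμG 2
    nlinarith [mul_le_mul_of_nonneg_left hcL (by positivity : 0 ≤ η * μ ^ 2),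
      mul_le_mul_of_nonneg_left hμ₂ (by positivity : 0 ≤ η * L)]
  refine le_geom (u := fun k => J (u k) - J ustar) hρ τ fun k _ => ?_
  rw [hiter]
  exact sub_le_one_sub_mul_sub_of_biased_step hc hL.le hμ.le hη.le hηL hstrong hsmooth (hlb _)
    (hub _) ustar

theorem biased_gradient_descent_linear_convergence {m : ℕ}
    (J : EuclideanSpace ℝ (Fin m) → ℝ)
    (gradJ g : EuclideanSpace ℝ (Fin m) → EuclideanSpace ℝ (Fin m))
    (c L μ μG η : ℝ) (hc : 0 < c) (hL : 0 < L) (hμ : 0 < μ) (hμG : μ ≤ μG)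
    (hstrong : ∀ u u', J u' ≥ J u + (inner ℝ (gradJ u) (u' - u) : ℝ) + c / 2 * ‖u - u'‖ ^ 2)
    (hsmooth : ∀ u u', ‖gradJ u - gradJ u'‖ ≤ L * ‖u - u'‖)
    (ustar : EuclideanSpace ℝ (Fin m)) (hmin : ∀ u, J ustar ≤ J u)
    (hlb : ∀ u, (inner ℝ (gradJ u) (g u) : ℝ) ≥ μ * ‖gradJ u‖ ^ 2)
    (hub : ∀ u, ‖g u‖ ≤ μG * ‖gradJ u‖)
    (hη : 0 < η) (hη' : η ≤ μ / (L * μG ^ 2))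
    (u : ℕ → EuclideanSpace ℝ (Fin m))
    (hiter : ∀ τ : ℕ, u (τ + 1) = u τ - η • g (u τ)) :
    ∀ τ : ℕ, J (u τ) - J ustar ≤ (1 - η * c * μ) ^ τ * (J (u 0) - J ustar) :=
  biased_gradient_descent_linear_convergence_general J gradJ g c L μ μG η hc hL hμ hμG hstrong
    hsmooth ustar hlb hub hη hη' u hiter
end
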